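/- There exists a piecewise linear unavoidable section in 𝕋³ = ℝ³/ℤ³. -/

import Mathlib

open Module Set

noncomputable section

/-- The integer lattice `ℤ³` as an additive subgroup of `ℝ³`. -/
def intLat3 : AddSubgroup (Fin 3 → ℝ) :=
  AddSubgroup.pi Set.univ fun _ => AddSubgroup.zmultiples (1 : ℝ)

/-- The torus `𝕋³ = ℝ³ / ℤ³`. -/
abbrev Torus3 := (Fin 3 → ℝ) ⧸ intLat3

/-- The canonical projection `π : ℝ³ → 𝕋³`. -/
def tproj : (Fin 3 → ℝ) →+ Torus3 := QuotientAddGroup.mk' intLat3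

/-- A subspace of `ℝ³` is rational if it is spanned by vectors with rational
coordinates. -/
def IsRationalSubspace (Q : Submodule ℝ (Fin 3 → ℝ)) : Prop :=
  ∃ S : Set (Fin 3 → ℚ),
    Q = Submodule.span ℝ ((fun v : Fin 3 → ℚ => fun i => (v i : ℝ)) '' S)

/-- A *piecewise linear unavoidable section* in `𝕋³`: a finite union of pairwise
disjoint projections of closed line segments that meets every coset of every
2-dimensional rational subtorus. -/
def IsPLUnavoidableSection (S : Set Torus3) : Prop :=
  (∃ (ℓ : ℕ) (a b : Fin ℓ → (Fin 3 → ℝ)),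
    S = (⋃ i, tproj '' segment ℝ (a i) (b i)) ∧
    ∀ i j, i ≠ j →
      Disjoint (tproj '' segment ℝ (a i) (b i)) (tproj '' segment ℝ (a j) (b j))) ∧
  (∀ x : Fin 3 → ℝ, ∀ Q : Submodule ℝ (Fin 3 → ℝ),
    IsRationalSubspace Q → finrank ℝ Q = 2 →
      (S ∩ tproj '' ((fun q => x + q) '' (Q : Set (Fin 3 → ℝ)))).Nonempty)

/-!
Take the three coordinate circles `π(½ e_{i+1} + ℝ e_i)`, `i ∈ ℤ/3`. Two of them, `i` and `i + 1`,
are disjoint because on the third coordinate `i + 2` the first vanishes and the second equals `½`.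
A plane `Q ⊂ ℝ³` cannot contain all three coordinate vectors, and if `e_i ∉ Q` then
`Q ⊕ ℝ e_i = ℝ³`, so every coset `x + Q` meets every line parallel to `e_i`, in particular the
lift of the `i`-th circle.
-/

namespace Submodule

theorem exists_single_notMem_of_ne_top {R ι : Type*} [Semiring R] [Finite ι] [DecidableEq ι]
    {Q : Submodule R (ι → R)} (hQ : Q ≠ ⊤) : ∃ i, Pi.single i 1 ∉ Q := by
  contrapose! hQ
  rw [eq_top_iff, ← (Pi.basisFun R ι).span_eq, span_le]
  rintro _ ⟨i, rfl⟩
  simpa using hQ i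

variable {K V : Type*} [DivisionRing K] [AddCommGroup V] [Module K V]

theorem sup_span_singleton_eq_top_of_finrank_add_one [FiniteDimensional K V]
    {Q : Submodule K V} (hQ : finrank K Q + 1 = finrank K V) {v : V} (hv : v ∉ Q) :
    Q ⊔ K ∙ v = ⊤ := by
  have hlt : Q < Q ⊔ K ∙ v := left_lt_sup.mpr fun h => hv (h (mem_span_singleton_self v))
  have := finrank_lt_finrank_of_lt hlt
  have := finrank_le (Q ⊔ K ∙ v)
  exact eq_top_of_finrank_eq (by omega)

theorem exists_add_eq_add_smul_of_sup_span_singleton_eq_top {Q : Submodule K V} {v : V}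
    (h : Q ⊔ K ∙ v = ⊤) (x b : V) : ∃ q ∈ Q, ∃ t : K, x + q = b + t • v := by
  obtain ⟨q, hq, w, hw, hsum⟩ := mem_sup.mp (h ▸ mem_top : b - x ∈ Q ⊔ K ∙ v)
  obtain ⟨t, rfl⟩ := mem_span_singleton.mp hw
  refine ⟨q, hq, -t, ?_⟩
  rw [neg_smul, ← sub_eq_add_neg, eq_sub_iff_add_eq, add_assoc, hsum, add_sub_cancel]

end Submodule

theorem apply_eq_of_mem_segment_add_single {ι : Type*} [DecidableEq ι] {b p : ι → ℝ} {i k : ι}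
    (hk : k ≠ i) (hp : p ∈ segment ℝ b (b + Pi.single i 1)) : p k = b k := by
  rw [segment_eq_image'] at hp
  obtain ⟨t, -, rfl⟩ := hp
  simp [hk]

theorem one_half_notMem_zmultiples_one : (1 / 2 : ℝ) ∉ AddSubgroup.zmultiples (1 : ℝ) := by
  rintro ⟨m, hm⟩
  have : ((2 * m : ℤ) : ℝ) = 1 := by
    simp only [zsmul_eq_mul, mul_one] at hm
    push_cast
    linarith
  have : 2 * m = 1 := by exact_mod_cast this
  omega

theorem mem_intLat3_iff {p : Fin 3 → ℝ} :
    p ∈ intLat3 ↔ ∀ k, p k ∈ AddSubgroup.zmultiples (1 : ℝ) := by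
  simp [intLat3, AddSubgroup.mem_pi]

theorem single_mem_intLat3 (i : Fin 3) : Pi.single i (1 : ℝ) ∈ intLat3 :=
  mem_intLat3_iff.mpr fun k => by
    rcases eq_or_ne k i with rfl | hk <;> simp [*]

theorem tproj_eq_tproj_iff {p q : Fin 3 → ℝ} : tproj p = tproj q ↔ -p + q ∈ intLat3 :=
  QuotientAddGroup.eq

theorem tproj_add_zsmul_single (p : Fin 3 → ℝ) (i : Fin 3) (n : ℤ) :
    tproj (p + n • Pi.single i 1) = tproj p := by
  rw [tproj_eq_tproj_iff, neg_add_rev, neg_add_cancel_right, neg_mem_iff]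
  exact zsmul_mem (single_mem_intLat3 i) n

theorem tproj_add_smul_single_mem_image_segment (b : Fin 3 → ℝ) (i : Fin 3) (t : ℝ) :
    tproj (b + t • Pi.single i 1) ∈ tproj '' segment ℝ b (b + Pi.single i 1) := by
  refine ⟨b + Int.fract t • Pi.single i 1, ?_, ?_⟩
  · rw [segment_eq_image']
    exact ⟨Int.fract t, ⟨Int.fract_nonneg t, (Int.fract_lt_one t).le⟩, by rw [add_sub_cancel_left]⟩
  · rw [← tproj_add_zsmul_single _ i ⌊t⌋, add_assoc, ← Int.cast_smul_eq_zsmul ℝ, ← add_smul,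
      Int.fract_add_floor]

def circleBase (i : Fin 3) : Fin 3 → ℝ := Pi.single (i + 1) (1 / 2)

def coordCircle (i : Fin 3) : Set Torus3 :=
  tproj '' segment ℝ (circleBase i) (circleBase i + Pi.single i 1)

theorem disjoint_coordCircle_add_one (i : Fin 3) : Disjoint (coordCircle i) (coordCircle (i + 1)) := by
  have h₀ : i + 2 ≠ i := by revert i; decide
  have h₁ : i + 2 ≠ i + 1 := by revert i; decide
  have h₂ : i + 2 = i + 1 + 1 := by revert i; decide
  rw [Set.disjoint_left]
  rintro _ ⟨p, hp, rfl⟩ ⟨q, hq, hqp⟩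
  have hp2 : p (i + 2) = 0 := by
    rw [apply_eq_of_mem_segment_add_single h₀ hp, circleBase, Pi.single_eq_of_ne h₁]
  have hq2 : q (i + 2) = 1 / 2 := by
    rw [apply_eq_of_mem_segment_add_single h₁ hq, circleBase, h₂, Pi.single_eq_same]
  have := mem_intLat3_iff.mp (tproj_eq_tproj_iff.mp hqp.symm) (i + 2)
  simp only [Pi.add_apply, Pi.neg_apply, hp2, hq2, neg_zero, zero_add] at this
  exact one_half_notMem_zmultiples_one this

theorem pairwise_disjoint_coordCircle : Pairwise fun i j => Disjoint (coordCircle i) (coordCircle j) := by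
  intro i j hij
  obtain rfl | rfl : j = i + 1 ∨ i = j + 1 := by revert i j; decide
  · exact disjoint_coordCircle_add_one i
  · exact (disjoint_coordCircle_add_one j).symm

theorem exists_coordCircle_inter_coset_nonempty (x : Fin 3 → ℝ) {Q : Submodule ℝ (Fin 3 → ℝ)}
    (hQ : finrank ℝ Q = 2) :
    ∃ i, (coordCircle i ∩ tproj '' ((fun q => x + q) '' (Q : Set (Fin 3 → ℝ)))).Nonempty := by
  obtain ⟨i, hi⟩ := Submodule.exists_single_notMem_of_ne_top (Q := Q) (by rintro rfl; simp at hQ)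
  have hQ' : finrank ℝ Q + 1 = finrank ℝ (Fin 3 → ℝ) := by simp [hQ]
  obtain ⟨q, hq, t, hx⟩ := Submodule.exists_add_eq_add_smul_of_sup_span_singleton_eq_top
    (Submodule.sup_span_singleton_eq_top_of_finrank_add_one hQ' hi) x (circleBase i)
  exact ⟨i, _, tproj_add_smul_single_mem_image_segment _ i t, _, ⟨q, hq, hx⟩, rfl⟩

/-- **Piecewise linear unavoidable sections in `𝕋³` exist.** -/
theorem exists_PL_unavoidable_section : ∃ S : Set Torus3, IsPLUnavoidableSection S := by
  refine ⟨⋃ i, coordCircle i,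
    ⟨3, circleBase, fun i => circleBase i + Pi.single i 1, rfl,
      fun _ _ hij => pairwise_disjoint_coordCircle hij⟩,
    fun x Q _ hQ => ?_⟩
  obtain ⟨i, hi⟩ := exists_coordCircle_inter_coset_nonempty x hQ
  exact hi.mono (inter_subset_inter_left _ (subset_iUnion coordCircle i))

end
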